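/- Let Σ and Σ̂ be symmetric p×p matrices with eigendecompositions with top-d eigenvector matrices U, Û ∈ ℝ^{p×d} (orthonormal columns) and eigenvalues λᵢ + σ² (for Σ, on the column space of U) and λ̂ⱼ + σ̂² (for Σ̂), all positive. Let D = diag((λᵢ+σ²)^{-1/2}), D̂ = diag((λ̂ⱼ+σ̂²)^{-1/2}). Then the entrywise identity UᵀÛD̂ − DUᵀÛ = (Uᵀ(Σ − Σ̂)Û) ∘ H holds, where H is the d×d matrix with Hᵢⱼ = (λ̂ⱼ+σ̂²)^{-1/2}(λᵢ+σ²)^{-1/2}((λ̂ⱼ+σ̂²)^{1/2} + (λᵢ+σ²)^{1/2})^{-1}, and consequently ‖UᵀÛD̂ − DUᵀÛ‖₂ ≤ ‖Uᵀ(Σ − Σ̂)Û‖₂ · ‖H‖₂. -/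

import Mathlib

/-!
The identity is the explicit solution of a Sylvester equation. Symmetry of `Σ` and the two
eigen-relations give `Uᵀ(Σ - Σ̂)Û = diag(a) M - M diag(b)` with `M = UᵀÛ`, i.e. the entries are
`(aᵢ - bⱼ) Mᵢⱼ`; since `aᵢ - bⱼ = (√aᵢ - √bⱼ)(√aᵢ + √bⱼ)`, multiplying by `Hᵢⱼ` leaves
`(bⱼ^{-1/2} - aᵢ^{-1/2}) Mᵢⱼ`, the corresponding entry of `MD̂ - DM`.

The norm bound is Schur's inequality `‖A ∘ B‖₂ ≤ ‖A‖₂ ‖B‖₂` (`spec` is the `ℓ²` operator norm).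
Entry `i` of `(A ∘ B)x` is entry `i` of `A zᵢ` with `zᵢ = (Bᵢₖ xₖ)ₖ`, so
`‖(A ∘ B)x‖² ≤ ∑ᵢ ‖A zᵢ‖² ≤ ‖A‖² ∑ₖ xₖ² ‖B eₖ‖² ≤ ‖A‖² ‖B‖² ‖x‖²`.
-/

open Matrix

noncomputable def l2 {n : ℕ} (v : Fin n → ℝ) : ℝ := Real.sqrt (∑ j, v j ^ 2)

/-- The spectral norm: sup of ‖Mx‖₂ over the ℓ₂ unit sphere. -/
noncomputable def spec {p₁ p₂ : ℕ} (M : Matrix (Fin p₁) (Fin p₂) ℝ) : ℝ :=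
  ⨆ x : {x : Fin p₂ → ℝ // l2 x = 1}, l2 (M.mulVec x.1)

open scoped Matrix.Norms.L2Operator

lemma inv_sqrt_sub_inv_sqrt {α β : ℝ} (hα : 0 < α) (hβ : 0 < β) :
    (√β)⁻¹ - (√α)⁻¹ = (α - β) * ((√β)⁻¹ * (√α)⁻¹ * (√β + √α)⁻¹) := by
  have hsα := Real.sqrt_pos.mpr hα
  have hsβ := Real.sqrt_pos.mpr hβ
  field_simp
  linear_combination Real.sq_sqrt hα.le - Real.sq_sqrt hβ.le

namespace Matrix

section EigenRelations

variable {n p : Type*} [Fintype n] [Fintype p] [DecidableEq n]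

lemma transpose_mul_eq_diagonal_mul_transpose {R : Type*} [CommSemiring R]
    {S : Matrix p p R} {U : Matrix p n R} {a : n → R}
    (hS : Sᵀ = S) (hSU : S * U = U * diagonal a) : Uᵀ * S = diagonal a * Uᵀ := by
  simpa [transpose_mul, hS] using congrArg transpose hSU

lemma transpose_mul_sub_mul_eq_diagonal_mul_sub_mul_diagonal {R : Type*} [CommRing R]
    {S Shat : Matrix p p R} {U Uhat : Matrix p n R} {a b : n → R} (hS : Sᵀ = S)
    (hSU : S * U = U * diagonal a) (hShatU : Shat * Uhat = Uhat * diagonal b) :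
    Uᵀ * (S - Shat) * Uhat = diagonal a * (Uᵀ * Uhat) - Uᵀ * Uhat * diagonal b := by
  rw [Matrix.mul_sub, Matrix.sub_mul, transpose_mul_eq_diagonal_mul_transpose hS hSU,
    Matrix.mul_assoc Uᵀ Shat, hShatU, Matrix.mul_assoc, Matrix.mul_assoc]

end EigenRelations

lemma mul_diagonal_inv_sqrt_sub_diagonal_inv_sqrt_mul {m n : Type*} [Fintype m] [Fintype n]
    [DecidableEq m] [DecidableEq n] (M : Matrix m n ℝ) {a : m → ℝ} {b : n → ℝ}
    (ha : ∀ i, 0 < a i) (hb : ∀ j, 0 < b j) :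
    M * diagonal (fun j => (√(b j))⁻¹) - diagonal (fun i => (√(a i))⁻¹) * M
      = (diagonal a * M - M * diagonal b) ⊙
          of fun i j => (√(b j))⁻¹ * (√(a i))⁻¹ * (√(b j) + √(a i))⁻¹ := by
  ext i j
  simp only [sub_apply, mul_diagonal, diagonal_mul, hadamard_apply, of_apply]
  rw [mul_comm _ (M i j), ← mul_sub, inv_sqrt_sub_inv_sqrt (ha i) (hb j)]
  ring

section L2OpNorm

variable {m n : Type*} [Fintype m] [Fintype n] [DecidableEq n]

lemma l2_opNorm_mulVec_toLp (A : Matrix m n ℝ) (x : n → ℝ) :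
    ‖(WithLp.toLp 2 (A *ᵥ x) : EuclideanSpace ℝ m)‖
      ≤ ‖A‖ * ‖(WithLp.toLp 2 x : EuclideanSpace ℝ n)‖ :=
  A.l2_opNorm_mulVec (WithLp.toLp 2 x)

lemma sum_sq_apply_le_l2_opNorm_sq (B : Matrix m n ℝ) (k : n) : ∑ i, B i k ^ 2 ≤ ‖B‖ ^ 2 := by
  have h := B.l2_opNorm_mulVec_toLp (Pi.single k 1)
  rw [mulVec_single_one, PiLp.toLp_single, PiLp.norm_single, norm_one, mul_one] at h
  simpa [EuclideanSpace.real_norm_sq_eq] using pow_le_pow_left₀ (norm_nonneg _) h 2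

theorem l2_opNorm_hadamard_le (A B : Matrix m n ℝ) : ‖A ⊙ B‖ ≤ ‖A‖ * ‖B‖ := by
  refine ContinuousLinearMap.opNorm_le_bound _ (by positivity) fun x => ?_
  rw [← sq_le_sq₀ (norm_nonneg _) (by positivity)]
  set z : m → n → ℝ := fun i k => B i k * x k
  calc ‖(WithLp.toLp 2 (A ⊙ B *ᵥ x.ofLp) : EuclideanSpace ℝ m)‖ ^ 2
      = ∑ i, (A *ᵥ z i) i ^ 2 := by
        simp only [EuclideanSpace.real_norm_sq_eq, mulVec, dotProduct, hadamard_apply,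
          mul_assoc, z]
    _ ≤ ∑ i, ‖(WithLp.toLp 2 (A *ᵥ z i) : EuclideanSpace ℝ m)‖ ^ 2 := by
        refine Finset.sum_le_sum fun i _ => ?_
        rw [← sq_abs, ← Real.norm_eq_abs]
        gcongr
        exact PiLp.norm_apply_le (WithLp.toLp 2 (A *ᵥ z i)) i
    _ ≤ ∑ i, (‖A‖ * ‖(WithLp.toLp 2 (z i) : EuclideanSpace ℝ n)‖) ^ 2 := by
        gcongr with i
        exact A.l2_opNorm_mulVec_toLp (z i)
    _ = ‖A‖ ^ 2 * ∑ k, (∑ i, B i k ^ 2) * x k ^ 2 := by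
        simp only [mul_pow, EuclideanSpace.real_norm_sq_eq, ← Finset.mul_sum, Finset.sum_mul, z]
        rw [Finset.sum_comm]
    _ ≤ ‖A‖ ^ 2 * ∑ k, ‖B‖ ^ 2 * x k ^ 2 := by
        gcongr with k
        exact B.sum_sq_apply_le_l2_opNorm_sq k
    _ = (‖A‖ * ‖B‖ * ‖x‖) ^ 2 := by
        rw [mul_pow, mul_pow, EuclideanSpace.real_norm_sq_eq, ← Finset.mul_sum, mul_assoc]

end L2OpNorm

end Matrix

lemma l2_eq_norm_toLp {n : ℕ} (v : Fin n → ℝ) :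
    l2 v = ‖(WithLp.toLp 2 v : EuclideanSpace ℝ (Fin n))‖ := by
  simp [l2, EuclideanSpace.norm_eq]

lemma spec_eq_l2_opNorm {m n : ℕ} (M : Matrix (Fin m) (Fin n) ℝ) : spec M = ‖M‖ := by
  rw [l2_opNorm_def, ← ContinuousLinearMap.sSup_sphere_eq_norm, spec, iSup]
  congr 1
  ext r
  constructor
  · rintro ⟨⟨x, hx⟩, rfl⟩
    refine ⟨WithLp.toLp 2 x, by simpa [l2_eq_norm_toLp] using hx, ?_⟩
    simp only [l2_eq_norm_toLp]
    rfl
  · rintro ⟨y, hy, rfl⟩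
    refine ⟨⟨y.ofLp, by simpa [l2_eq_norm_toLp] using hy⟩, ?_⟩
    simp only [l2_eq_norm_toLp]
    rfl

/-- Here `a i = λᵢ + σ²` and `b j = λ̂ⱼ + σ̂²`. -/
theorem stmt13_general {p d : ℕ} (S Shat : Matrix (Fin p) (Fin p) ℝ)
    (U Uhat : Matrix (Fin p) (Fin d) ℝ) (a b : Fin d → ℝ)
    (hS : Sᵀ = S)
    (ha : ∀ i, 0 < a i) (hb : ∀ j, 0 < b j)
    (hSU : S * U = U * Matrix.diagonal a)
    (hShatU : Shat * Uhat = Uhat * Matrix.diagonal b) :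
    Uᵀ * Uhat * Matrix.diagonal (fun j => (Real.sqrt (b j))⁻¹)
        - Matrix.diagonal (fun i => (Real.sqrt (a i))⁻¹) * (Uᵀ * Uhat)
      = Matrix.hadamard (Uᵀ * (S - Shat) * Uhat)
          (Matrix.of fun i j =>
            (Real.sqrt (b j))⁻¹ * (Real.sqrt (a i))⁻¹ *
              (Real.sqrt (b j) + Real.sqrt (a i))⁻¹) ∧
    spec (Uᵀ * Uhat * Matrix.diagonal (fun j => (Real.sqrt (b j))⁻¹)
        - Matrix.diagonal (fun i => (Real.sqrt (a i))⁻¹) * (Uᵀ * Uhat))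
      ≤ spec (Uᵀ * (S - Shat) * Uhat) *
          spec (Matrix.of fun i j =>
            (Real.sqrt (b j))⁻¹ * (Real.sqrt (a i))⁻¹ *
              (Real.sqrt (b j) + Real.sqrt (a i))⁻¹) := by
  have key := (Uᵀ * Uhat).mul_diagonal_inv_sqrt_sub_diagonal_inv_sqrt_mul ha hb
  rw [← transpose_mul_sub_mul_eq_diagonal_mul_sub_mul_diagonal hS hSU hShatU] at key
  refine ⟨key, ?_⟩
  rw [key, spec_eq_l2_opNorm, spec_eq_l2_opNorm, spec_eq_l2_opNorm]
  exact l2_opNorm_hadamard_le _ _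

/-- Entrywise identity `UᵀÛD̂ − DUᵀÛ = (Uᵀ(Σ − Σ̂)Û) ∘ H` and the resulting
spectral norm bound `‖UᵀÛD̂ − DUᵀÛ‖₂ ≤ ‖Uᵀ(Σ − Σ̂)Û‖₂ ‖H‖₂`, where
`a i = λᵢ + σ²`, `b j = λ̂ⱼ + σ̂²` are the top-`d` eigenvalues of `Σ`, `Σ̂`, and
`D = diag(aᵢ^{-1/2})`, `D̂ = diag(bⱼ^{-1/2})`,
`Hᵢⱼ = bⱼ^{-1/2} aᵢ^{-1/2} (bⱼ^{1/2} + aᵢ^{1/2})⁻¹`. -/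
theorem stmt13 {p d : ℕ} (S Shat : Matrix (Fin p) (Fin p) ℝ)
    (U Uhat : Matrix (Fin p) (Fin d) ℝ) (a b : Fin d → ℝ)
    (hS : Sᵀ = S) (hShat : Shatᵀ = Shat)
    (hU : Uᵀ * U = 1) (hUhat : Uhatᵀ * Uhat = 1)
    (ha : ∀ i, 0 < a i) (hb : ∀ j, 0 < b j)
    (hSU : S * U = U * Matrix.diagonal a)
    (hShatU : Shat * Uhat = Uhat * Matrix.diagonal b) :
    Uᵀ * Uhat * Matrix.diagonal (fun j => (Real.sqrt (b j))⁻¹)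
        - Matrix.diagonal (fun i => (Real.sqrt (a i))⁻¹) * (Uᵀ * Uhat)
      = Matrix.hadamard (Uᵀ * (S - Shat) * Uhat)
          (Matrix.of fun i j =>
            (Real.sqrt (b j))⁻¹ * (Real.sqrt (a i))⁻¹ *
              (Real.sqrt (b j) + Real.sqrt (a i))⁻¹) ∧
    spec (Uᵀ * Uhat * Matrix.diagonal (fun j => (Real.sqrt (b j))⁻¹)
        - Matrix.diagonal (fun i => (Real.sqrt (a i))⁻¹) * (Uᵀ * Uhat))
      ≤ spec (Uᵀ * (S - Shat) * Uhat) *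
          spec (Matrix.of fun i j =>
            (Real.sqrt (b j))⁻¹ * (Real.sqrt (a i))⁻¹ *
              (Real.sqrt (b j) + Real.sqrt (a i))⁻¹) :=
  stmt13_general S Shat U Uhat a b hS ha hb hSU hShatU
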